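/- arXiv:0910.2977 — 2 statements merged into one kernel-verified Lean document; each statement's English description precedes it below -/
import Mathlib

section
/- Let R be an associative ring and I a two-sided ideal of R. Suppose I is nilpotent of index at most c, i.e., I^{c+1} = 0, and suppose the quotient ring R/I² is Lie nilpotent of class at most d, i.e., γ_{d+1}(R/I²) = 0, where c, d ≥ 1. Then γ_{μ(c,d)}(R) = 0, where μ(c,d) = 2cd − c − d + 2. -/
/-- The lower Lie central series of an associative ring, indexed so that
`lowerLieCentral R n = γ_{n+1}(R)`: `γ₁(R) = R` and `γ_{n+1}(R)` is the additive subgroup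
generated by all `[a,r] = a*r - r*a` with `a ∈ γ_n(R)`, `r ∈ R`. -/
def lowerLieCentral (R : Type*) [Ring R] : ℕ → AddSubgroup R
  | 0 => ⊤
  | n + 1 => AddSubgroup.closure
      {x : R | ∃ a ∈ lowerLieCentral R n, ∃ r : R, x = a * r - r * a}

namespace Stmt7Aux

open AddSubgroup

variable {R : Type*} [Ring R]

/-- span of products of elements of two additive subgroups -/
def mulSG (U V : AddSubgroup R) : AddSubgroup R :=
  closure {x : R | ∃ u ∈ U, ∃ v ∈ V, x = u * v}

/-- span of brackets -/
def brk (U : AddSubgroup R) : AddSubgroup R :=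
  closure {x : R | ∃ a ∈ U, ∃ r : R, x = a * r - r * a}

lemma mul_mem_mulSG {U V : AddSubgroup R} {u v : R} (hu : u ∈ U) (hv : v ∈ V) :
    u * v ∈ mulSG U V := subset_closure ⟨u, hu, v, hv, rfl⟩

lemma mulSG_le {U V W : AddSubgroup R} (h : ∀ u ∈ U, ∀ v ∈ V, u * v ∈ W) :
    mulSG U V ≤ W := by
  rw [mulSG, closure_le]
  rintro x ⟨u, hu, v, hv, rfl⟩
  exact h u hu v hv

lemma mulSG_mono {U V U' V' : AddSubgroup R} (h1 : U ≤ U') (h2 : V ≤ V') :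
    mulSG U V ≤ mulSG U' V' :=
  mulSG_le fun u hu v hv => mul_mem_mulSG (h1 hu) (h2 hv)

lemma brk_mem {U : AddSubgroup R} {a : R} (r : R) (ha : a ∈ U) :
    a * r - r * a ∈ brk U := subset_closure ⟨a, ha, r, rfl⟩

lemma brk_le {U W : AddSubgroup R} (h : ∀ a ∈ U, ∀ r : R, a * r - r * a ∈ W) :
    brk U ≤ W := by
  rw [brk, closure_le]
  rintro x ⟨a, ha, r, rfl⟩
  exact h a ha r

lemma brk_mono {U V : AddSubgroup R} (h : U ≤ V) : brk U ≤ brk V :=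
  brk_le fun a ha r => brk_mem r (h ha)

lemma brk_closure_le {S : Set R} {W : AddSubgroup R}
    (h : ∀ x ∈ S, ∀ r : R, x * r - r * x ∈ W) : brk (closure S) ≤ W := by
  apply brk_le
  intro a ha r
  refine closure_induction (p := fun x _ => x * r - r * x ∈ W)
    (fun x hx => h x hx r) ?_ ?_ ?_ ha
  · simpa using W.zero_mem
  · intro x y _ _ hx hy
    have : (x + y) * r - r * (x + y) = (x * r - r * x) + (y * r - r * y) := by noncomm_ring
    rw [this]; exact W.add_mem hx hy
  · intro x _ hx
    have : (-x) * r - r * (-x) = -(x * r - r * x) := by noncomm_ring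
    rw [this]; exact W.neg_mem hx

lemma brk_sup {U V : AddSubgroup R} : brk (U ⊔ V) ≤ brk U ⊔ brk V := by
  rw [sup_eq_closure]
  apply brk_closure_le
  rintro x (hx | hx) r
  · exact le_sup_left (a := brk U) (b := brk V) (brk_mem r hx)
  · exact le_sup_right (a := brk U) (b := brk V) (brk_mem r hx)

lemma brk_bot : brk (⊥ : AddSubgroup R) ≤ ⊥ :=
  brk_le fun a ha r => by
    rw [mem_bot] at ha; subst ha; simp

lemma brk_mulSG {U V : AddSubgroup R} :
    brk (mulSG U V) ≤ mulSG (brk U) V ⊔ mulSG U (brk V) := by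
  apply brk_closure_le
  rintro x ⟨u, hu, v, hv, rfl⟩ r
  have : (u * v) * r - r * (u * v)
      = (u * r - r * u) * v + u * (v * r - r * v) := by noncomm_ring
  rw [this]
  exact add_mem
    (le_sup_left (a := mulSG (brk U) V) (b := mulSG U (brk V))
      (mul_mem_mulSG (brk_mem r hu) hv))
    (le_sup_right (a := mulSG (brk U) V) (b := mulSG U (brk V))
      (mul_mem_mulSG hu (brk_mem r hv)))

/-- iterated bracket -/
def brkIter : ℕ → AddSubgroup R → AddSubgroup R
  | 0, U => U
  | n + 1, U => brk (brkIter n U)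

lemma brkIter_mono (n : ℕ) {U V : AddSubgroup R} (h : U ≤ V) :
    brkIter n U ≤ brkIter n V := by
  induction n with
  | zero => exact h
  | succ n ih => exact brk_mono ih

lemma brkIter_add (m n : ℕ) (U : AddSubgroup R) :
    brkIter (m + n) U = brkIter n (brkIter m U) := by
  induction n with
  | zero => rfl
  | succ n ih => show brk (brkIter (m + n) U) = brk (brkIter n (brkIter m U)); rw [ih]

lemma llc_eq_brkIter (n : ℕ) : lowerLieCentral R n = brkIter n (⊤ : AddSubgroup R) := by
  induction n with
  | zero => rfl
  | succ n ih =>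
    show AddSubgroup.closure _ = brk (brkIter n ⊤)
    rw [← ih]; rfl

lemma llc_add (m n : ℕ) : lowerLieCentral R (m + n) = brkIter n (lowerLieCentral R m) := by
  induction n with
  | zero => rfl
  | succ n ih =>
    show AddSubgroup.closure _ = brk (brkIter n (lowerLieCentral R m))
    rw [← ih]; rfl

lemma llc_map {S : Type*} [Ring S] (f : R →+* S) (n : ℕ) :
    ∀ x ∈ lowerLieCentral R n, f x ∈ lowerLieCentral S n := by
  induction n with
  | zero => intro x _; trivial
  | succ n ih =>
    intro x hx
    refine closure_induction (p := fun x _ => f x ∈ lowerLieCentral S (n + 1)) ?_ ?_ ?_ ?_ hx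
    · rintro x ⟨a, ha, r, rfl⟩
      have : f (a * r - r * a) = f a * f r - f r * f a := by
        rw [map_sub, map_mul, map_mul]
      rw [this]
      exact subset_closure ⟨f a, ih a ha, f r, rfl⟩
    · simpa using (lowerLieCentral S (n+1)).zero_mem
    · intro x y _ _ hx hy; rw [map_add]; exact add_mem hx hy
    · intro x _ hx; rw [map_neg]; exact neg_mem hx

end Stmt7Aux

namespace Stmt7Aux

open AddSubgroup

variable {R : Type*} [Ring R]

/-- the underlying additive subgroup of a two-sided ideal -/
def iadd (I : TwoSidedIdeal R) : AddSubgroup R where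
  carrier := I
  zero_mem' := I.zero_mem
  add_mem' := I.add_mem
  neg_mem' := I.neg_mem

lemma mem_iadd {I : TwoSidedIdeal R} {x : R} : x ∈ iadd I ↔ x ∈ I := Iff.rfl

/-- additive subgroup spanned by products of `n` elements of `I` (and anything) -/
def ipow (I : TwoSidedIdeal R) : ℕ → AddSubgroup R
  | 0 => ⊤
  | n + 1 => mulSG (iadd I) (ipow I n)

lemma mul_mem_ipow_left (I : TwoSidedIdeal R) (n : ℕ) (r : R) {x : R}
    (hx : x ∈ ipow I n) : r * x ∈ ipow I n := by
  induction n with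
  | zero => trivial
  | succ n _ =>
    refine closure_induction (p := fun x _ => r * x ∈ ipow I (n + 1)) ?_ ?_ ?_ ?_ hx
    · rintro x ⟨a, ha, v, hv, rfl⟩
      rw [← mul_assoc]
      exact mul_mem_mulSG (I.mul_mem_left r a ha) hv
    · simpa using (ipow I (n+1)).zero_mem
    · intro x y _ _ hx hy; rw [mul_add]; exact add_mem hx hy
    · intro x _ hx; rw [mul_neg]; exact neg_mem hx

lemma ipow_mul_mem (I : TwoSidedIdeal R) (m n : ℕ) {x y : R}
    (hx : x ∈ ipow I m) (hy : y ∈ ipow I n) : x * y ∈ ipow I (m + n) := by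
  induction m generalizing x with
  | zero => rw [Nat.zero_add]; exact mul_mem_ipow_left I n x hy
  | succ m ih =>
    have hmn : m + 1 + n = (m + n) + 1 := by omega
    rw [hmn]
    refine closure_induction (p := fun x _ => x * y ∈ ipow I (m + n + 1)) ?_ ?_ ?_ ?_ hx
    · rintro x ⟨a, ha, v, hv, rfl⟩
      rw [mul_assoc]
      exact mul_mem_mulSG ha (ih hv)
    · simpa using (ipow I (m+n+1)).zero_mem
    · intro x y' _ _ hx hy'; rw [add_mul]; exact add_mem hx hy'
    · intro x _ hx; rw [neg_mul]; exact neg_mem hx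

lemma ipow_succ_le (I : TwoSidedIdeal R) (n : ℕ) : ipow I (n + 1) ≤ ipow I n :=
  mulSG_le fun a _ v hv => mul_mem_ipow_left I n a hv

lemma ipow_antitone (I : TwoSidedIdeal R) {m n : ℕ} (h : m ≤ n) :
    ipow I n ≤ ipow I m := by
  obtain ⟨k, rfl⟩ : ∃ k, n = m + k := ⟨n - m, by omega⟩
  induction k with
  | zero => exact le_rfl
  | succ k ih => exact (ipow_succ_le I (m + k)).trans (ih (by omega))

lemma iadd_le_ipow_one (I : TwoSidedIdeal R) : iadd I ≤ ipow I 1 := by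
  intro a ha
  have := mul_mem_mulSG (V := (⊤ : AddSubgroup R)) ha (mem_top 1)
  rwa [mul_one] at this

lemma brk_iadd_le (I : TwoSidedIdeal R) : brk (iadd I) ≤ iadd I :=
  brk_le fun a ha r => sub_mem (I.mul_mem_right a r ha) (I.mul_mem_left r a ha)

lemma brkIter_iadd_le (I : TwoSidedIdeal R) (n : ℕ) : brkIter n (iadd I) ≤ iadd I := by
  induction n with
  | zero => exact le_rfl
  | succ n ih => exact (brk_mono ih).trans (brk_iadd_le I)

lemma ipow_eq_bot {I : TwoSidedIdeal R} {c : ℕ}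
    (hInil : ∀ l : List R, l.length = c + 1 → (∀ x ∈ l, x ∈ I) → l.prod = 0) :
    ipow I (c + 1) = ⊥ := by
  have key : ∀ m, ∀ x ∈ ipow I m, ∀ l : List R,
      (∀ y ∈ l, y ∈ I) → l.length + m = c + 1 → l.prod * x = 0 := by
    intro m
    induction m with
    | zero =>
      intro x _ l hl hlen
      rw [hInil l (by omega) hl, zero_mul]
    | succ m ih =>
      intro x hx
      refine closure_induction
        (p := fun x _ => ∀ l : List R, (∀ y ∈ l, y ∈ I) → l.length + (m+1) = c + 1 →
          l.prod * x = 0) ?_ ?_ ?_ ?_ hx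
      · rintro x ⟨a, ha, v, hv, rfl⟩ l hl hlen
        have h1 : l.prod * (a * v) = (l ++ [a]).prod * v := by
          rw [List.prod_append, List.prod_singleton, mul_assoc]
        rw [h1]
        refine ih v hv (l ++ [a]) ?_ (by simp; omega)
        intro y hy
        rcases List.mem_append.mp hy with h | h
        · exact hl y h
        · rw [List.mem_singleton.mp h]; exact ha
      · intro l _ _; rw [mul_zero]
      · intro x y _ _ hx hy l hl hlen
        rw [mul_add, hx l hl hlen, hy l hl hlen, add_zero]
      · intro x _ hx l hl hlen
        rw [mul_neg, hx l hl hlen, neg_zero]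
  rw [eq_bot_iff]
  intro x hx
  have := key (c + 1) x hx ([] : List R) (by simp) (by simp)
  rw [List.prod_nil, one_mul] at this
  simpa using this

end Stmt7Aux

namespace Stmt7Aux

/-- `fexp d i` : guaranteed power of `I` containing the `i`-fold bracket of `I`. -/
def fexp (d i : ℕ) : ℕ := if i < d then 1 else 1 + (i + d - 1) / (2 * d - 1)

lemma nat_div_aux1 {e a b s : ℕ} (he : 0 < e) (h : s + e ≤ a + b + 1) :
    s / e ≤ a / e + b / e := by
  by_contra hcon
  push_neg at hcon
  have h2 : e * (a / e) + e * (b / e) + e ≤ e * (s / e) := by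
    have h3 : a / e + b / e + 1 ≤ s / e := hcon
    calc e * (a / e) + e * (b / e) + e = e * (a / e + b / e + 1) := by ring
      _ ≤ e * (s / e) := Nat.mul_le_mul_left e h3
  have ha := Nat.div_add_mod a e
  have ha' : a % e < e := Nat.mod_lt _ he
  have hb := Nat.div_add_mod b e
  have hb' : b % e < e := Nat.mod_lt _ he
  have hs := Nat.div_add_mod s e
  generalize e * (a / e) = A at ha h2
  generalize e * (b / e) = B at hb h2
  generalize e * (s / e) = C at hs h2
  generalize a % e = ra at ha ha'
  generalize b % e = rb at hb hb'
  generalize s % e = rs at hs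
  omega

lemma nat_div_aux2 {e a b t : ℕ} (he : 0 < e) (h : t * e + e ≤ a + b + 1) :
    t ≤ a / e + b / e := by
  by_contra hcon
  push_neg at hcon
  have h2 : e * (a / e) + e * (b / e) + e ≤ e * t := by
    have h3 : a / e + b / e + 1 ≤ t := hcon
    calc e * (a / e) + e * (b / e) + e = e * (a / e + b / e + 1) := by ring
      _ ≤ e * t := Nat.mul_le_mul_left e h3
  have ha := Nat.div_add_mod a e
  have ha' : a % e < e := Nat.mod_lt _ he
  have hb := Nat.div_add_mod b e
  have hb' : b % e < e := Nat.mod_lt _ he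
  have het : e * t = t * e := by ring
  rw [het] at h2
  generalize e * (a / e) = A at ha h2
  generalize e * (b / e) = B at hb h2
  generalize a % e = ra at ha ha'
  generalize b % e = rb at hb hb'
  generalize t * e = T at h h2
  omega

lemma fexp_pos (d i : ℕ) : 1 ≤ fexp d i := by
  unfold fexp; split
  · exact le_rfl
  · exact Nat.le_add_right 1 _

lemma fexp_small {d i : ℕ} (h : i < d) : fexp d i = 1 := if_pos h

lemma fexp_big {d : ℕ} (hd : 1 ≤ d) (i : ℕ) :
    fexp d (d + i) = 2 + i / (2 * d - 1) := by
  unfold fexp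
  rw [if_neg (by omega)]
  have h1 : d + i + d - 1 = i + (2 * d - 1) := by omega
  rw [h1, Nat.add_div_right _ (by omega : 0 < 2 * d - 1)]
  omega

/-- subadditivity-type inequality -/
lemma fexp_C2 {d : ℕ} (hd : 1 ≤ d) (i j : ℕ) :
    fexp d (d + (i + j)) ≤ fexp d i + fexp d j := by
  have he : 0 < 2 * d - 1 := by omega
  rw [fexp_big hd]
  by_cases hi : i < d <;> by_cases hj : j < d
  · rw [fexp_small hi, fexp_small hj]
    have : (i + j) / (2 * d - 1) = 0 := Nat.div_eq_of_lt (by omega)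
    omega
  · -- i < d ≤ j
    rw [fexp_small hi]
    unfold fexp
    rw [if_neg hj]
    have : (i + j) / (2 * d - 1) ≤ (j + d - 1) / (2 * d - 1) :=
      Nat.div_le_div_right (by omega)
    omega
  · rw [fexp_small hj]
    unfold fexp
    rw [if_neg hi]
    have : (i + j) / (2 * d - 1) ≤ (i + d - 1) / (2 * d - 1) :=
      Nat.div_le_div_right (by omega)
    omega
  · unfold fexp
    rw [if_neg hi, if_neg hj]
    have : (i + j) / (2 * d - 1) ≤ (i + d - 1) / (2 * d - 1) + (j + d - 1) / (2 * d - 1) :=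
      nat_div_aux1 he (by omega)
    omega

/-- the final lower bound -/
lemma fexp_C3 {c d : ℕ} (hc : 1 ≤ c) (hd : 1 ≤ d) {i j : ℕ}
    (h : i + j = (c - 1) * (2 * d - 1)) : c + 1 ≤ fexp d i + fexp d j := by
  have he : 0 < 2 * d - 1 := by omega
  by_cases hi : i < d <;> by_cases hj : j < d
  · -- both small: forces c = 1
    rw [fexp_small hi, fexp_small hj]
    rcases Nat.eq_or_lt_of_le hc with h1 | h1
    · omega
    · -- c ≥ 2 : contradiction
      exfalso
      have h2 : 2 * d - 1 ≤ (c - 1) * (2 * d - 1) :=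
        Nat.le_mul_of_pos_left _ (by omega)
      omega
  · rw [fexp_small hi]
    unfold fexp
    rw [if_neg hj]
    have : c - 1 ≤ (j + d - 1) / (2 * d - 1) :=
      (Nat.le_div_iff_mul_le he).mpr (by omega)
    omega
  · rw [fexp_small hj]
    unfold fexp
    rw [if_neg hi]
    have : c - 1 ≤ (i + d - 1) / (2 * d - 1) :=
      (Nat.le_div_iff_mul_le he).mpr (by omega)
    omega
  · unfold fexp
    rw [if_neg hi, if_neg hj]
    have : c - 1 ≤ (i + d - 1) / (2 * d - 1) + (j + d - 1) / (2 * d - 1) := by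
      refine nat_div_aux2 he ?_
      omega
    omega

end Stmt7Aux

namespace Stmt7Aux

open AddSubgroup

variable {R : Type*} [Ring R]

lemma brk_finsetSup {ι : Type*} [DecidableEq ι] (s : Finset ι) (f : ι → AddSubgroup R) :
    brk (s.sup f) ≤ s.sup fun i => brk (f i) := by
  induction s using Finset.induction with
  | empty => simpa using brk_bot
  | insert a s hnot ih =>
    rw [Finset.sup_insert, Finset.sup_insert]
    exact brk_sup.trans (sup_le_sup le_rfl ih)

/-- distributing `t` brackets over products of two bracket-towers of `I`. -/
lemma main_sup (I : TwoSidedIdeal R) (t : ℕ) :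
    brkIter t (mulSG (iadd I) (iadd I)) ≤
      (Finset.range (t + 1)).sup
        (fun i => mulSG (brkIter i (iadd I)) (brkIter (t - i) (iadd I))) := by
  induction t with
  | zero =>
    rw [show Finset.range 1 = {0} from rfl, Finset.sup_singleton]
    exact le_rfl
  | succ t ih =>
    have h1 : brkIter (t + 1) (mulSG (iadd I) (iadd I))
        ≤ brk ((Finset.range (t + 1)).sup
          (fun i => mulSG (brkIter i (iadd I)) (brkIter (t - i) (iadd I)))) := brk_mono ih
    refine h1.trans ((brk_finsetSup _ _).trans ?_)
    refine Finset.sup_le ?_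
    intro i hi
    rw [Finset.mem_range] at hi
    have hi' : i ≤ t := by omega
    refine brk_mulSG.trans (sup_le ?_ ?_)
    · have e1 : t + 1 - (i + 1) = t - i := by omega
      have h2 : mulSG (brk (brkIter i (iadd I))) (brkIter (t - i) (iadd I))
          = mulSG (brkIter (i+1) (iadd I)) (brkIter (t + 1 - (i+1)) (iadd I)) := by
        rw [e1]; rfl
      rw [h2]
      exact Finset.le_sup (f := fun i =>
        mulSG (brkIter i (iadd I)) (brkIter (t + 1 - i) (iadd I)))
        (Finset.mem_range.mpr (by omega : i + 1 < t + 2))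
    · have e1 : t + 1 - i = (t - i) + 1 := by omega
      have h2 : mulSG (brkIter i (iadd I)) (brk (brkIter (t - i) (iadd I)))
          = mulSG (brkIter i (iadd I)) (brkIter (t + 1 - i) (iadd I)) := by
        rw [e1]; rfl
      rw [h2]
      exact Finset.le_sup (f := fun i =>
        mulSG (brkIter i (iadd I)) (brkIter (t + 1 - i) (iadd I)))
        (Finset.mem_range.mpr (by omega : i < t + 2))

/-- Main estimate: the `i`-fold bracket of `I` lies in `I ^ fexp d i`. -/
lemma A_le_ipow (I : TwoSidedIdeal R) {d : ℕ} (hd : 1 ≤ d)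
    (hQ : brkIter d (iadd I) ≤ mulSG (iadd I) (iadd I)) (i : ℕ) :
    brkIter i (iadd I) ≤ ipow I (fexp d i) := by
  induction i using Nat.strong_induction_on with
  | _ i IH =>
    by_cases h : i < d
    · rw [fexp_small h]
      exact (brkIter_iadd_le I i).trans (iadd_le_ipow_one I)
    · obtain ⟨t, rfl⟩ : ∃ t, i = d + t := ⟨i - d, by omega⟩
      rw [brkIter_add]
      refine ((brkIter_mono t hQ).trans (main_sup I t)).trans ?_
      refine Finset.sup_le ?_
      intro j hj
      rw [Finset.mem_range] at hj
      have hj' : j ≤ t := by omega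
      have h1 : brkIter j (iadd I) ≤ ipow I (fexp d j) := IH j (by omega)
      have h2 : brkIter (t - j) (iadd I) ≤ ipow I (fexp d (t - j)) := IH (t - j) (by omega)
      refine (mulSG_mono h1 h2).trans ?_
      refine (mulSG_le fun u hu v hv => ipow_mul_mem I _ _ hu hv).trans ?_
      refine ipow_antitone I ?_
      have := fexp_C2 hd j (t - j)
      have e1 : j + (t - j) = t := by omega
      rw [e1] at this
      exact this

end Stmt7Aux

/-- If `I` is a two-sided ideal of an associative ring `R` with `I^{c+1} = 0` (every product
of `c+1` elements of `I` vanishes) and `R/I²` is Lie nilpotent of class at most `d`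
(`γ_{d+1}(R/I²) = 0`), then `γ_{μ(c,d)}(R) = 0` where `μ(c,d) = 2cd - c - d + 2`. -/
theorem stmt_7 (R : Type*) [Ring R] (I : TwoSidedIdeal R) (c d : ℕ)
    (hc : 1 ≤ c) (hd : 1 ≤ d)
    (hInil : ∀ l : List R, l.length = c + 1 → (∀ x ∈ l, x ∈ I) → l.prod = 0)
    (hquot : lowerLieCentral
        ((TwoSidedIdeal.span {x : R | ∃ a ∈ I, ∃ b ∈ I, x = a * b}).ringCon.Quotient) d = ⊥) :
    lowerLieCentral R (2 * c * d - c - d + 1) = ⊥ := by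
  classical
  open Stmt7Aux in
  -- notation
  set J : TwoSidedIdeal R := TwoSidedIdeal.span {x : R | ∃ a ∈ I, ∃ b ∈ I, x = a * b} with hJ
  set Q2 : AddSubgroup R := mulSG (iadd I) (iadd I) with hQ2
  -- Q2 as a two-sided ideal
  have hQ2l : ∀ (r x : R), x ∈ Q2 → r * x ∈ Q2 := by
    intro r x hx
    refine AddSubgroup.closure_induction (p := fun x _ => r * x ∈ Q2) ?_ ?_ ?_ ?_ hx
    · rintro x ⟨a, ha, b, hb, rfl⟩
      rw [← mul_assoc]
      exact mul_mem_mulSG (I.mul_mem_left r a ha) hb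
    · simpa using Q2.zero_mem
    · intro x y _ _ hx hy; rw [mul_add]; exact add_mem hx hy
    · intro x _ hx; rw [mul_neg]; exact neg_mem hx
  have hQ2r : ∀ (r x : R), x ∈ Q2 → x * r ∈ Q2 := by
    intro r x hx
    refine AddSubgroup.closure_induction (p := fun x _ => x * r ∈ Q2) ?_ ?_ ?_ ?_ hx
    · rintro x ⟨a, ha, b, hb, rfl⟩
      rw [mul_assoc]
      exact mul_mem_mulSG ha (I.mul_mem_right b r hb)
    · simpa using Q2.zero_mem
    · intro x y _ _ hx hy; rw [add_mul]; exact add_mem hx hy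
    · intro x _ hx; rw [neg_mul]; exact neg_mem hx
  set K : TwoSidedIdeal R := TwoSidedIdeal.mk' (Q2 : Set R) Q2.zero_mem
    (fun h1 h2 => Q2.add_mem h1 h2) (fun h1 => Q2.neg_mem h1)
    (fun {x y} h => hQ2l x y h) (fun {x y} h => hQ2r y x h) with hK
  have hJQ2 : ∀ x ∈ J, x ∈ Q2 := by
    intro x hx
    rw [hJ, TwoSidedIdeal.mem_span_iff] at hx
    have := hx K (by
      rintro z ⟨a, ha, b, hb, rfl⟩
      rw [hK, SetLike.mem_coe, TwoSidedIdeal.mem_mk']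
      exact mul_mem_mulSG ha hb)
    rwa [hK, TwoSidedIdeal.mem_mk'] at this
  -- γ_{d+1}(R) ⊆ Q2
  have hLLCd : lowerLieCentral R d ≤ Q2 := by
    intro x hx
    have h1 := llc_map (J.ringCon.mk') d x hx
    rw [hquot, AddSubgroup.mem_bot] at h1
    refine hJQ2 x ?_
    rw [TwoSidedIdeal.mem_iff]
    have h2 : J.ringCon.mk' x = J.ringCon.mk' 0 := by rw [h1, map_zero]
    exact J.ringCon.eq.mp h2
  -- bracket tower of I at level d is inside Q2
  have hQ : brkIter d (iadd I) ≤ Q2 := by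
    refine (brkIter_mono d le_top).trans ?_
    rw [← llc_eq_brkIter]
    exact hLLCd
  -- index arithmetic
  have hN : 2 * c * d - c - d + 1 = d + (c - 1) * (2 * d - 1) := by
    obtain ⟨c', rfl⟩ : ∃ c', c = c' + 1 := ⟨c - 1, by omega⟩
    obtain ⟨d', rfl⟩ : ∃ d', d = d' + 1 := ⟨d - 1, by omega⟩
    have h1 : 2 * (c' + 1) * (d' + 1) = 2 * (c' * d') + 2 * c' + 2 * d' + 2 := by ring
    have h2 : (c' + 1 - 1) * (2 * (d' + 1) - 1) = 2 * (c' * d') + c' := by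
      have e1 : c' + 1 - 1 = c' := rfl
      have e2 : 2 * (d' + 1) - 1 = 2 * d' + 1 := by omega
      rw [e1, e2]; ring
    rw [h1, h2]
    generalize c' * d' = p
    omega
  rw [hN, llc_add, eq_bot_iff]
  set t := (c - 1) * (2 * d - 1) with ht
  calc brkIter t (lowerLieCentral R d)
      ≤ brkIter t Q2 := brkIter_mono t hLLCd
    _ ≤ (Finset.range (t + 1)).sup
        (fun i => mulSG (brkIter i (iadd I)) (brkIter (t - i) (iadd I))) := main_sup I t
    _ ≤ ipow I (c + 1) := by
        refine Finset.sup_le ?_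
        intro i hi
        rw [Finset.mem_range] at hi
        refine (mulSG_mono (A_le_ipow I hd hQ i) (A_le_ipow I hd hQ (t - i))).trans ?_
        refine (mulSG_le fun u hu v hv => ipow_mul_mem I _ _ hu hv).trans ?_
        refine ipow_antitone I ?_
        exact fexp_C3 hc hd (by omega)
    _ ≤ ⊥ := by rw [ipow_eq_bot hInil]
end

section
/- Let R be an associative ring and let z be a central element of R with z^n = 0 for some n ≥ 1. If the quotient ring R/zR is Lie nilpotent of class at most m, i.e., γ_{m+1}(R/zR) = 0, then R is Lie nilpotent of class at most nm, i.e., γ_{nm+1}(R) = 0. -/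
/-- A ring hom maps the lower Lie central series into the lower Lie central series. -/
lemma lowerLieCentral_map {R S : Type*} [Ring R] [Ring S] (f : R →+* S) :
    ∀ k, ∀ x ∈ lowerLieCentral R k, f x ∈ lowerLieCentral S k := by
  intro k
  induction k with
  | zero => intro x _; trivial
  | succ k ih =>
    intro x hx
    refine AddSubgroup.closure_induction ?_ ?_ ?_ ?_ hx
    · rintro y ⟨a, ha, r, rfl⟩
      refine AddSubgroup.subset_closure ⟨f a, ih a ha, f r, ?_⟩
      simp [map_sub, map_mul]
    · simpa using (lowerLieCentral S (k + 1)).zero_mem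
    · intro a b _ _ hfa hfb
      simpa using (lowerLieCentral S (k + 1)).add_mem hfa hfb
    · intro a _ hfa
      simpa using (lowerLieCentral S (k + 1)).neg_mem hfa

/-- If `c` is central, then commutator steps commute with multiplication by `c`. -/
lemma lowerLieCentral_shift {R : Type*} [Ring R] (c : R) (hc : ∀ r : R, c * r = r * c) :
    ∀ j b, (∀ x ∈ lowerLieCentral R b, ∃ y ∈ lowerLieCentral R 0, x = c * y) →
      ∀ x ∈ lowerLieCentral R (b + j), ∃ y ∈ lowerLieCentral R j, x = c * y := by
  intro j
  induction j with
  | zero => intro b hb x hx; exact hb x hx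
  | succ j ih =>
    intro b hb x hx
    have hx' : x ∈ lowerLieCentral R ((b + j) + 1) := by
      have : b + (j + 1) = (b + j) + 1 := by ring
      rwa [this] at hx
    refine AddSubgroup.closure_induction ?_ ?_ ?_ ?_ hx'
    · rintro w ⟨a, ha, r, rfl⟩
      obtain ⟨y, hy, rfl⟩ := ih b hb a ha
      refine ⟨y * r - r * y, AddSubgroup.subset_closure ⟨y, hy, r, rfl⟩, ?_⟩
      rw [mul_sub, mul_assoc]
      rw [show r * (c * y) = c * (r * y) by rw [← mul_assoc, ← hc r, mul_assoc]]
    · exact ⟨0, (lowerLieCentral R (j + 1)).zero_mem, by simp⟩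
    · rintro a b' _ _ ⟨y, hy, rfl⟩ ⟨y', hy', rfl⟩
      exact ⟨y + y', (lowerLieCentral R (j + 1)).add_mem hy hy', by rw [mul_add]⟩
    · rintro a _ ⟨y, hy, rfl⟩
      exact ⟨-y, (lowerLieCentral R (j + 1)).neg_mem hy, by rw [mul_neg]⟩

/-- If `z` is a central element of an associative ring `R` with `z^n = 0` (`n ≥ 1`) and the
quotient `R/zR` is Lie nilpotent of class at most `m` (`γ_{m+1}(R/zR) = 0`), then `R` is
Lie nilpotent of class at most `nm` (`γ_{nm+1}(R) = 0`). -/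
theorem stmt_13 (R : Type*) [Ring R] (z : R) (hz : ∀ r : R, z * r = r * z)
    (n : ℕ) (hn : 1 ≤ n) (hzn : z ^ n = 0)
    (J : TwoSidedIdeal R) (hJ : ∀ x : R, x ∈ J ↔ ∃ r : R, x = z * r)
    (m : ℕ) (hquot : lowerLieCentral J.ringCon.Quotient m = ⊥) :
    lowerLieCentral R (n * m) = ⊥ := by
  have hzk : ∀ k : ℕ, ∀ r : R, z ^ k * r = r * z ^ k := by
    intro k r
    induction k with
    | zero => simp
    | succ k ih => rw [pow_succ, mul_assoc, hz r, ← mul_assoc, ih, mul_assoc]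
  -- Step A: γ_m(R) ⊆ zR
  have hA : ∀ x ∈ lowerLieCentral R m, ∃ r : R, x = z * r := by
    intro x hx
    have h1 : J.ringCon.mk' x ∈ lowerLieCentral J.ringCon.Quotient m :=
      lowerLieCentral_map J.ringCon.mk' m x hx
    rw [hquot, AddSubgroup.mem_bot] at h1
    have h2 : (x : J.ringCon.Quotient) = ((0 : R) : J.ringCon.Quotient) := by
      simpa using h1
    have h3 : x ∈ J := by
      have := J.ringCon.eq.mp h2
      simpa [TwoSidedIdeal.mem_iff] using this
    exact (hJ x).mp h3
  -- Main induction: γ_{k·m}(R) ⊆ z^k R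
  have hP : ∀ k : ℕ, ∀ x ∈ lowerLieCentral R (k * m), ∃ r : R, x = z ^ k * r := by
    intro k
    induction k with
    | zero => intro x _; exact ⟨x, by simp⟩
    | succ k ih =>
      intro x hx
      have hx' : x ∈ lowerLieCentral R (k * m + m) := by
        rwa [show (k + 1) * m = k * m + m by ring] at hx
      obtain ⟨y, hy, rfl⟩ :=
        lowerLieCentral_shift (z ^ k) (hzk k) m (k * m)
          (fun w hw => by
            obtain ⟨r, hr⟩ := ih w hw
            exact ⟨r, trivial, hr⟩) x hx'
      obtain ⟨r, rfl⟩ := hA y hy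
      exact ⟨r, by rw [pow_succ, mul_assoc]⟩
  rw [eq_bot_iff]
  intro x hx
  obtain ⟨r, rfl⟩ := hP n x hx
  simp [hzn]
end
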